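/- arXiv:2311.17186 — 4 statements merged into one kernel-verified Lean document; each statement's English description precedes it below -/
import Mathlib

section
/- Let k ≥ 1 and let Q be a polynomial in the variables X_{σ,i} (σ ∈ S_{k+1}^0, 1 ≤ i ≤ k) with real coefficients that is block-invariant, i.e. invariant under every renaming of variables of the form X_{σ,i} ↦ X_{π(σ),i} for a permutation π of the index set S_{k+1}^0. Then there exists a polynomial S in the variables x_0, …, x_k with real coefficients such that for all x = (x_0,…,x_k) ∈ ℝ^{k+1}: Q(⊕_{σ∈S_{k+1}^0} x_σ) − Q(⊕_{σ∈S_{k+1}^1} x_σ) = S(x) · ∏_{0≤j<i≤k} (x_i − x_j), where Q(⊕_{σ∈S_{k+1}^1} x_σ) denotes the evaluation of Q at the assignment X_{σ,i} = x_{((0 1)∘σ)(i)}. -/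
/-!
By block invariance, substituting `x_{τ σ}` for the block of variables of `Q` indexed by `σ`
gives a polynomial in `x` that depends only on the sign of `τ`: left multiplication by an even
permutation permutes the even permutations. So the difference `F` of the even and the odd
substitution changes sign under every transposition of the `x_i`. The specialization
`x_i := x_j` is invariant under the transposition `(i j)`, hence kills `F`, so `x_i - x_j ∣ F`.
The factors `x_i - x_j` with `j < i` are pairwise non-associated primes, so their product, the
Vandermonde product, divides `F` as well.
-/

open MvPolynomial Equiv Equiv.Perm

theorem Finset.prod_dvd_of_prime_of_injOn {M ι : Type*} [CommMonoidWithZero M] [IsCancelMulZero M]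
    {s : Finset ι} {f : ι → M} {n : M} (hprime : ∀ i ∈ s, Prime (f i))
    (hinj : Set.InjOn (Associates.mk ∘ f) s) (hdvd : ∀ i ∈ s, f i ∣ n) : ∏ i ∈ s, f i ∣ n := by
  classical
  have himage : ∏ i ∈ s, Associates.mk (f i) = ∏ a ∈ s.image (Associates.mk ∘ f), a :=
    (Finset.prod_image (f := id) hinj).symm
  rw [← Associates.mk_dvd_mk, ← Associates.mkMonoidHom_apply, map_prod]
  simp only [Associates.mkMonoidHom_apply, himage]
  refine Finset.prod_primes_dvd _ ?_ ?_ <;> simp only [Finset.mem_image] <;>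
    rintro _ ⟨i, hi, rfl⟩
  · exact Associates.prime_mk.mpr (hprime i hi)
  · exact Associates.mk_dvd_mk.mpr (hdvd i hi)

namespace MvPolynomial

variable {σ R : Type*} [CommRing R] [DecidableEq σ]

theorem X_sub_X_dvd_sub_rename_update (i j : σ) (p : MvPolynomial σ R) :
    X i - X j ∣ p - rename (Function.update id i j) p := by
  let I := Ideal.span {(X i - X j : MvPolynomial σ R)}
  have hcomp : (Ideal.Quotient.mkₐ R I).comp (rename (Function.update id i j)) =
      Ideal.Quotient.mkₐ R I := by
    ext l
    rcases eq_or_ne l i with rfl | hl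
    · simpa [Ideal.Quotient.eq, I, Ideal.mem_span_singleton] using dvd_sub_comm.mp dvd_rfl
    · simp [hl]
  rw [← Ideal.mem_span_singleton, ← Ideal.Quotient.eq, ← Ideal.Quotient.mkₐ_eq_mk R,
    ← AlgHom.comp_apply, hcomp]

theorem prime_X_sub_X [IsDomain R] {i j : σ} (h : i ≠ j) :
    Prime (X i - X j : MvPolynomial σ R) := by
  let ψ := (renameEquiv R (Equiv.optionSubtypeNe i).symm).trans
    (optionEquivLeft R {b : σ // b ≠ i})
  have hψ : ψ (X i - X j) = Polynomial.X - Polynomial.C (X ⟨j, h.symm⟩) := by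
    simp [ψ, Equiv.optionSubtypeNe_symm_of_ne h.symm,
      optionEquivLeft_X_none, optionEquivLeft_X_some]
  exact (MulEquiv.prime_iff ψ.toMulEquiv).mp (hψ ▸ Polynomial.prime_X_sub_C _)

theorem eq_and_eq_or_eq_and_eq_of_X_sub_X_dvd [Nontrivial R] {i j a b : σ} (hab : a ≠ b)
    (h : (X i - X j : MvPolynomial σ R) ∣ X a - X b) : i = a ∧ j = b ∨ i = b ∧ j = a := by
  have key : ∀ x : σ → R, x i = x j → x a = x b := by
    intro x hx
    obtain ⟨u, hu⟩ := h
    simpa [hx, sub_eq_zero] using congrArg (eval x) hu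
  have ha := key (Pi.single a 1)
  have hb := key (Pi.single b 1)
  have h10 : (1 : R) ≠ 0 := one_ne_zero
  grind

theorem X_sub_X_dvd_of_rename_swap_eq_neg [IsDomain R] [CharZero R] {F : MvPolynomial σ R}
    (hF : ∀ a b, a ≠ b → rename (swap a b) F = -F) {i j : σ} (hij : i ≠ j) : X i - X j ∣ F := by
  have hcollapse : Function.update id i j ∘ swap i j = Function.update id i j := by
    ext l
    simp only [Function.comp_apply, swap_apply_def, Function.update_apply, id]
    grind
  have hzero : rename (Function.update id i j) F = 0 := by
    rw [← CharZero.eq_neg_self_iff, ← map_neg, ← hF i j hij, rename_rename, hcollapse]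
  simpa [hzero] using X_sub_X_dvd_sub_rename_update i j F

theorem vandermonde_dvd_of_rename_swap_eq_neg [IsDomain R] [CharZero R] {n : ℕ}
    {F : MvPolynomial (Fin n) R} (hF : ∀ a b, a ≠ b → rename (swap a b) F = -F) :
    ∏ i : Fin n, ∏ j ∈ Finset.Iio i, (X i - X j) ∣ F := by
  have hlt : ∀ p ∈ Finset.univ.sigma fun i : Fin n => Finset.Iio i, p.2 < p.1 := by simp
  rw [Finset.prod_sigma']
  refine Finset.prod_dvd_of_prime_of_injOn (fun p hp => prime_X_sub_X (hlt p hp).ne')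
    (fun p hp q hq hpq => ?_) (fun p hp => X_sub_X_dvd_of_rename_swap_eq_neg hF (hlt p hp).ne')
  have hdvd := (Associates.mk_eq_mk_iff_associated.mp hpq).dvd
  rcases eq_and_eq_or_eq_and_eq_of_X_sub_X_dvd (hlt q hq).ne' hdvd with ⟨h1, h2⟩ | ⟨h1, h2⟩
  · exact Sigma.ext h1 (heq_of_eq h2)
  · have := hlt p hp
    have := hlt q hq
    omega

end MvPolynomial

section BlockSubstitution

variable {α ι R : Type*} [DecidableEq α] [Fintype α]

-- `rename (blockVars Fin.succ τ) Q` is `Q(⊕_σ x_{τ σ})`; `τ = (0 1)` gives the odd block.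
def blockVars (e : ι → α) (τ : Perm α) (q : {σ : Perm α // sign σ = 1} × ι) : α :=
  τ (q.1.1 (e q.2))

theorem comp_blockVars (e : ι → α) (ρ τ : Perm α) : ρ ∘ blockVars e τ = blockVars e (ρ * τ) :=
  rfl

theorem rename_blockVars_eq_of_sign_eq [CommSemiring R] {e : ι → α}
    {Q : MvPolynomial ({σ : Perm α // sign σ = 1} × ι) R}
    (hQ : ∀ π : Perm {σ : Perm α // sign σ = 1}, rename (fun q => (π q.1, q.2)) Q = Q)
    {τ τ' : Perm α} (h : sign τ = sign τ') :
    rename (blockVars e τ) Q = rename (blockVars e τ') Q := by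
  have hg : sign (τ'⁻¹ * τ) = 1 := by simp [h]
  let π : Perm {σ : Perm α // sign σ = 1} :=
    (Equiv.mulLeft (τ'⁻¹ * τ)).subtypeEquiv fun σ => by
      rw [Equiv.coe_mulLeft, map_mul, hg, one_mul]
  conv_rhs => rw [← hQ π, rename_rename]
  congr 1
  ext q
  simp [blockVars, π, Perm.mul_apply]

noncomputable def blockDifference [CommRing R] (e : ι → α) (τ : Perm α)
    (Q : MvPolynomial ({σ : Perm α // sign σ = 1} × ι) R) : MvPolynomial α R :=
  rename (blockVars e 1) Q - rename (blockVars e τ) Q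

theorem rename_blockDifference_of_sign_eq_neg_one [CommRing R] {e : ι → α}
    {Q : MvPolynomial ({σ : Perm α // sign σ = 1} × ι) R}
    (hQ : ∀ π : Perm {σ : Perm α // sign σ = 1}, rename (fun q => (π q.1, q.2)) Q = Q)
    {τ ρ : Perm α} (hτ : sign τ = -1) (hρ : sign ρ = -1) :
    rename ρ (blockDifference e τ Q) = -blockDifference e τ Q := by
  rw [blockDifference, map_sub, rename_rename, rename_rename, comp_blockVars, comp_blockVars,
    rename_blockVars_eq_of_sign_eq hQ (τ := ρ * 1) (τ' := τ) (by simp [hρ, hτ]),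
    rename_blockVars_eq_of_sign_eq hQ (τ := ρ * τ) (τ' := 1) (by simp [hρ, hτ]), neg_sub]

end BlockSubstitution

/-- If `Q` is a polynomial in the variables `X_{σ,i}` (`σ` an even permutation of
`{0,…,k}`, `1 ≤ i ≤ k`) that is invariant under every renaming `X_{σ,i} ↦ X_{π(σ),i}` for a
permutation `π` of the even permutations, then there is a polynomial `S` in `x_0,…,x_k` such that
`Q(⊕_{σ even} x_σ) − Q(⊕_{σ odd} x_σ) = S(x) · ∏_{j<i} (x_i − x_j)` for all `x ∈ ℝ^{k+1}`. -/
theorem block_invariant_difference_factors (k : ℕ) (hk : 1 ≤ k)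
    (Q : MvPolynomial
      ({σ : Equiv.Perm (Fin (k + 1)) // Equiv.Perm.sign σ = 1} × Fin k) ℝ)
    (hQ : ∀ π : Equiv.Perm {σ : Equiv.Perm (Fin (k + 1)) // Equiv.Perm.sign σ = 1},
      MvPolynomial.rename (fun q => (π q.1, q.2)) Q = Q) :
    ∃ S : MvPolynomial (Fin (k + 1)) ℝ, ∀ x : Fin (k + 1) → ℝ,
      MvPolynomial.eval (fun q => x (q.1.1 q.2.succ)) Q
        - MvPolynomial.eval (fun q => x (Equiv.swap 0 1 (q.1.1 q.2.succ))) Q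
      = MvPolynomial.eval x S * ∏ i : Fin (k + 1), ∏ j ∈ Finset.Iio i, (x i - x j) := by
  have h01 : (0 : Fin (k + 1)) ≠ 1 := by
    obtain ⟨m, rfl⟩ := Nat.exists_eq_add_of_le' hk
    exact zero_ne_one
  obtain ⟨S, hS⟩ := vandermonde_dvd_of_rename_swap_eq_neg fun a b hab =>
    rename_blockDifference_of_sign_eq_neg_one (e := Fin.succ) hQ (sign_swap h01) (sign_swap hab)
  refine ⟨S, fun x => ?_⟩
  simpa [blockDifference, blockVars, eval_rename, Function.comp_def, map_prod, mul_comm] using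
    congrArg (eval x) hS
end

section
/- Let k ≥ 1, let a ∈ ℝ with a ≠ 0, and let x = (x_0,…,x_k) ∈ ℝ^{k+1}. If y_0, y_1 ∈ ℝ satisfy a·y_0 + P_{(k)}(⊕_{σ∈S_{k+1}^0} x_σ) = 0 and a·y_1 + P_{(k)}(⊕_{σ∈S_{k+1}^1} x_σ) = 0, then y_0 − y_1 = −(1/a) · ∏_{0≤j<i≤k} (x_i − x_j). In particular, if all the x_i are pairwise distinct then y_0 ≠ y_1. -/
lemma vandermonde_as_diff (k : ℕ) (x : Fin (k + 1) → ℝ) :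
    (∑ σ ∈ Finset.univ.filter
        (fun σ : Equiv.Perm (Fin (k + 1)) => Equiv.Perm.sign σ = 1),
        ∏ i : Fin k, x (σ i.succ) ^ (i.val + 1))
    - (∑ σ ∈ Finset.univ.filter
        (fun σ : Equiv.Perm (Fin (k + 1)) => Equiv.Perm.sign σ = -1),
        ∏ i : Fin k, x (σ i.succ) ^ (i.val + 1))
    = ∏ i : Fin (k + 1), ∏ j ∈ Finset.Iio i, (x i - x j) := by
  have hswap : (∏ i : Fin (k + 1), ∏ j ∈ Finset.Iio i, (x i - x j))
      = ∏ i : Fin (k + 1), ∏ j ∈ Finset.Ioi i, (x j - x i) := by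
    rw [Finset.prod_comm' (t' := Finset.univ) (s' := fun j => Finset.Ioi j)
      (fun i j => by simp)]
  rw [hswap, ← Matrix.det_vandermonde, Matrix.det_apply]
  rw [← Finset.sum_filter_add_sum_filter_not Finset.univ
      (fun σ : Equiv.Perm (Fin (k + 1)) => Equiv.Perm.sign σ = 1)]
  have hprod : ∀ σ : Equiv.Perm (Fin (k + 1)),
      ∏ i : Fin (k + 1), Matrix.vandermonde x (σ i) i
      = ∏ i : Fin k, x (σ i.succ) ^ (i.val + 1) := by
    intro σ
    rw [Fin.prod_univ_succ]
    simp [Matrix.vandermonde]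
  have hneg : Finset.univ.filter
      (fun σ : Equiv.Perm (Fin (k+1)) => ¬ Equiv.Perm.sign σ = 1)
      = Finset.univ.filter (fun σ => Equiv.Perm.sign σ = -1) := by
    apply Finset.filter_congr
    intro σ _
    rcases Int.units_eq_one_or (Equiv.Perm.sign σ) with h | h <;> simp [h]
  rw [hneg]
  rw [Finset.sum_congr rfl (fun σ hσ => by
    rw [Finset.mem_filter] at hσ
    rw [hσ.2, hprod σ]; simp : ∀ σ ∈ Finset.univ.filter
      (fun σ : Equiv.Perm (Fin (k+1)) => Equiv.Perm.sign σ = 1),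
      Equiv.Perm.sign σ • ∏ i : Fin (k + 1), Matrix.vandermonde x (σ i) i
      = ∏ i : Fin k, x (σ i.succ) ^ (i.val + 1))]
  rw [Finset.sum_congr rfl (fun σ hσ => by
    rw [Finset.mem_filter] at hσ
    rw [hσ.2, hprod σ]; simp : ∀ σ ∈ Finset.univ.filter
      (fun σ : Equiv.Perm (Fin (k+1)) => Equiv.Perm.sign σ = -1),
      Equiv.Perm.sign σ • ∏ i : Fin (k + 1), Matrix.vandermonde x (σ i) i
      = -∏ i : Fin k, x (σ i.succ) ^ (i.val + 1))]
  rw [Finset.sum_neg_distrib]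
  ring

/-- If `a ≠ 0` and `y_0, y_1` solve `a·y_0 + P_{(k)}(⊕_{σ even} x_σ) = 0` and
`a·y_1 + P_{(k)}(⊕_{σ odd} x_σ) = 0`, then `y_0 − y_1 = −(1/a)·∏_{j<i}(x_i − x_j)`; in
particular, if the `x_i` are pairwise distinct then `y_0 ≠ y_1`. -/
theorem diff_of_solutions_eq_vandermonde (k : ℕ) (hk : 1 ≤ k) (a : ℝ) (ha : a ≠ 0)
    (x : Fin (k + 1) → ℝ) (y0 y1 : ℝ)
    (h0 : a * y0 + (∑ σ ∈ Finset.univ.filter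
        (fun σ : Equiv.Perm (Fin (k + 1)) => Equiv.Perm.sign σ = 1),
        ∏ i : Fin k, x (σ i.succ) ^ (i.val + 1)) = 0)
    (h1 : a * y1 + (∑ σ ∈ Finset.univ.filter
        (fun σ : Equiv.Perm (Fin (k + 1)) => Equiv.Perm.sign σ = -1),
        ∏ i : Fin k, x (σ i.succ) ^ (i.val + 1)) = 0) :
    y0 - y1 = -(1 / a) * ∏ i : Fin (k + 1), ∏ j ∈ Finset.Iio i, (x i - x j)
    ∧ (Function.Injective x → y0 ≠ y1) := by
  have key := vandermonde_as_diff k x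
  have hmain : y0 - y1 = -(1 / a) * ∏ i : Fin (k + 1), ∏ j ∈ Finset.Iio i, (x i - x j) := by
    rw [← key]
    field_simp
    linarith
  refine ⟨hmain, fun hinj hy => ?_⟩
  rw [hy, sub_self] at hmain
  have hprod : (∏ i : Fin (k + 1), ∏ j ∈ Finset.Iio i, (x i - x j)) ≠ 0 := by
    apply Finset.prod_ne_zero_iff.mpr
    intro i _
    apply Finset.prod_ne_zero_iff.mpr
    intro j hj
    rw [Finset.mem_Iio] at hj
    exact sub_ne_zero_of_ne (fun h => absurd (hinj h) (ne_of_gt hj))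
  have : -(1/a) ≠ 0 := by simp [ha]
  exact (mul_ne_zero this hprod) hmain.symm
end

section
/- Let k ≥ 1 and let Q : ⊕_{σ∈S_{k+1}^0} ℝ^k → ℝ be any block-invariant function. Define ΔQ(x) := Q(⊕_{σ∈S_{k+1}^0} x_σ) − Q(⊕_{σ∈S_{k+1}^1} x_σ) for x ∈ ℝ^{k+1}. Then ΔQ is an alternating function of (x_0,…,x_k): for every permutation τ of {0,…,k}, ΔQ(x_{τ(0)}, x_{τ(1)}, …, x_{τ(k)}) = sgn(τ) · ΔQ(x_0, …, x_k). -/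
/-!
Left multiplication by an even permutation `g` permutes the even permutations, so block
invariance makes `g ↦ Q (⊕_σ x_{gσ})` constant on each coset of the alternating group.
The two terms of `ΔQ(x ∘ τ)` are its values at `τ` and `τ ∘ (0 1)`, those of `ΔQ(x)` its
values at `1` and `(0 1)`: for even `τ` they agree termwise, for odd `τ` they are exchanged.
-/

open Equiv

def IsBlockInvariant {ι β γ : Type*} (Q : (ι → β) → γ) : Prop :=
  ∀ π : Perm ι, ∀ X : ι → β, Q (fun i => X (π i)) = Q X

namespace IsBlockInvariant

variable {α β γ : Type*} [Fintype α] [DecidableEq α]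
  {Q : ({σ : Perm α // Perm.sign σ = 1} → β) → γ}

theorem comp_mul_left_of_sign_eq_one (hQ : IsBlockInvariant Q) {g : Perm α}
    (hg : Perm.sign g = 1) (F : Perm α → β) :
    Q (fun σ => F (g * σ.1)) = Q (fun σ => F σ.1) :=
  hQ ((Equiv.mulLeft g).subtypePerm fun σ => by simp [hg]) fun σ => F σ.1

theorem comp_mul_left_of_sign_eq (hQ : IsBlockInvariant Q) {g g' : Perm α}
    (h : Perm.sign g = Perm.sign g') (F : Perm α → β) :
    Q (fun σ => F (g * σ.1)) = Q (fun σ => F (g' * σ.1)) := by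
  have hsign : Perm.sign (g'⁻¹ * g) = 1 := by simp [h]
  simpa [mul_assoc] using hQ.comp_mul_left_of_sign_eq_one hsign fun ρ => F (g' * ρ)

end IsBlockInvariant

theorem Equiv.Perm.sub_apply_mul_eq_sign_mul_of_sign_eq_neg_one {α R : Type*} [Fintype α]
    [DecidableEq α] [CommRing R] {D : Perm α → R}
    (hD : ∀ g g', Perm.sign g = Perm.sign g' → D g = D g') {s : Perm α}
    (hs : Perm.sign s = -1) (τ : Perm α) :
    D τ - D (τ * s) = ((Perm.sign τ : ℤ) : R) * (D 1 - D s) := by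
  rcases Int.units_eq_one_or (Perm.sign τ) with hτ | hτ
  · rw [hD τ 1 (by simp [hτ]), hD (τ * s) s (by simp [hτ]), hτ]
    simp
  · rw [hD τ s (by simp [hτ, hs]), hD (τ * s) 1 (by simp [hτ, hs]), hτ]
    push_cast
    ring

/-- For any block-invariant function `Q` of the `S_{k+1}^0`-indexed tuples from
`ℝ^k`, the difference `ΔQ(x) := Q(⊕_{σ even} x_σ) − Q(⊕_{σ odd} x_σ)` is an alternating function
of `(x_0,…,x_k)`: for every permutation `τ` of `{0,…,k}` one has
`ΔQ(x∘τ) = sgn(τ)·ΔQ(x)`. -/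
theorem block_invariant_difference_alternating (k : ℕ) (hk : 1 ≤ k)
    (Q : ({σ : Equiv.Perm (Fin (k + 1)) // Equiv.Perm.sign σ = 1} → (Fin k → ℝ)) → ℝ)
    (hQ : ∀ π : Equiv.Perm {σ : Equiv.Perm (Fin (k + 1)) // Equiv.Perm.sign σ = 1},
      ∀ X : {σ : Equiv.Perm (Fin (k + 1)) // Equiv.Perm.sign σ = 1} → (Fin k → ℝ),
      Q (fun σ => X (π σ)) = Q X)
    (x : Fin (k + 1) → ℝ) (τ : Equiv.Perm (Fin (k + 1))) :
    Q (fun σ i => x (τ (σ.1 i.succ)))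
      - Q (fun σ i => x (τ (Equiv.swap 0 1 (σ.1 i.succ))))
    = ((Equiv.Perm.sign τ : ℤ) : ℝ) *
      (Q (fun σ i => x (σ.1 i.succ))
        - Q (fun σ i => x (Equiv.swap 0 1 (σ.1 i.succ)))) := by
  have : NeZero k := ⟨by omega⟩
  have h01 : (0 : Fin (k + 1)) ≠ 1 := zero_ne_one
  exact Perm.sub_apply_mul_eq_sign_mul_of_sign_eq_neg_one
    (D := fun g => Q fun σ i => x ((g * σ.1) i.succ))
    (fun _ _ h => IsBlockInvariant.comp_mul_left_of_sign_eq hQ h fun ρ i => x (ρ i.succ))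
    (Perm.sign_swap h01) τ
end

section
/- Let k ≥ 2 and let E := S_{k+1}^0. Let F : ℝ × (ℝ^k)^E × ℝ → ℝ be a C^∞ map, written F(Y, X; λ), that is block-invariant in X (invariant under all permutations of the E-indexed arguments from ℝ^k), with F(0, 0; 0) = 0 and a := (∂F/∂Y)(0, 0; 0) ≠ 0. Let Υ ⊂ (0,∞) be a finite set, let ε > 0, let real numbers p_{i,j} ∈ Υ be given for all 0 ≤ j < i ≤ k, and set p̄ := ∑_{0≤j<i≤k} p_{i,j}. Assume: every element of Υ is ≤ p̄; for all p, q ∈ Υ, either p+q ∈ Υ or p+q ≥ p̄+ε; and either 1 ∈ Υ or 1 ≥ p̄+ε. Let δ > 0 and let x_0, …, x_k : [0,δ) → ℝ satisfy, as λ → 0⁺: x_i(λ) = ∑_{p∈Υ} A_{i,p} λ^p + O(λ^{p̄+ε}) for some real coefficients A_{i,p}, and x_i(λ) − x_j(λ) = D_{i,j} λ^{p_{i,j}} + o(λ^{p_{i,j}}) with D_{i,j} ≠ 0, for all 0 ≤ j < i ≤ k. Let y_0, y_1 : [0,δ) → ℝ satisfy, as λ → 0⁺, y_s(λ) = ∑_{p∈Υ}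 B_{s,p} λ^p + O(λ^{p̄+ε}) for some real coefficients B_{s,p} (s = 0,1), and suppose that for all λ ∈ [0,δ): F(y_0(λ), (x(λ)_σ)_{σ∈E}; λ) = 0 and F(y_1(λ), (x(λ)_{(0 1)∘σ})_{σ∈E}; λ) = 0, where x(λ) = (x_0(λ),…,x_k(λ)). Then y_0(λ) − y_1(λ) = O(λ^{p̄}) as λ → 0⁺. -/
open Filter Asymptotics Topology Polynomial
open scoped ContDiff

/-- Iterated Rolle: a smooth function vanishing at `n+1` increasing points has a zero
of its `n`-th derivative inside. -/
lemma rolle_iterated : ∀ (n : ℕ) (f : ℝ → ℝ), ContDiff ℝ ∞ f →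
    ∀ (t : Fin (n+1) → ℝ), StrictMono t → (∀ i, f (t i) = 0) →
    ∃ ξ ∈ Set.Icc (t 0) (t (Fin.last n)), iteratedDeriv n f ξ = 0 := by
  intro n
  induction n with
  | zero => exact fun f _ t _ h0 => ⟨t 0, ⟨le_refl _, le_refl _⟩, by simpa using h0 0⟩
  | succ n ih =>
    intro f hf t ht h0
    have key : ∀ i : Fin (n+1), ∃ c ∈ Set.Ioo (t i.castSucc) (t i.succ), deriv f c = 0 := by
      intro i
      exact exists_deriv_eq_zero (ht (Fin.castSucc_lt_succ (i := i))) hf.continuous.continuousOn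
        ((h0 _).trans (h0 _).symm)
    choose u hu hu0 using key
    have hum : StrictMono u := by
      intro i j hij
      calc u i < t i.succ := (hu i).2
        _ ≤ t j.castSucc := ht.monotone (by
          rw [Fin.succ_le_castSucc_iff]; exact hij)
        _ < u j := (hu j).1
    have hder : ContDiff ℝ ∞ (deriv f) := (contDiff_infty_iff_deriv.mp hf).2
    obtain ⟨ξ, hξ, hd⟩ := ih (deriv f) hder u hum hu0
    refine ⟨ξ, ⟨?_, ?_⟩, ?_⟩
    · refine le_trans ?_ hξ.1
      refine le_trans ?_ (hu 0).1.le
      exact ht.monotone (by simp)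
    · refine le_trans hξ.2 ?_
      refine le_trans (hu (Fin.last n)).2.le ?_
      exact ht.monotone (by simp [Fin.le_def])
    · rw [iteratedDeriv_succ']; exact hd

lemma iteratedDeriv_polyeval (m : ℕ) : ∀ (P : Polynomial ℝ),
    iteratedDeriv m (fun x => P.eval x) = fun x => (Polynomial.derivative^[m] P).eval x := by
  induction m with
  | zero => intro P; simp
  | succ m ih =>
    intro P
    rw [iteratedDeriv_succ']
    have h1 : deriv (fun x => P.eval x) = fun x => (Polynomial.derivative P).eval x :=
      funext fun x => P.deriv
    rw [h1, ih, Function.iterate_succ_apply]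

lemma nodal_iteratedDeriv (n : ℕ) (t : Fin n → ℝ) :
    iteratedDeriv n (fun x => ∏ i, (x - t i)) = fun _ => (n.factorial : ℝ) := by
  have hP : (fun x : ℝ => ∏ i, (x - t i))
      = fun x => (∏ i, (Polynomial.X - Polynomial.C (t i))).eval x := by
    funext x; simp [Polynomial.eval_prod]
  rw [hP, iteratedDeriv_polyeval]
  set P : Polynomial ℝ := ∏ i, (Polynomial.X - Polynomial.C (t i)) with hPdef
  have hm : P.Monic := monic_prod_of_monic _ _ (fun i _ => monic_X_sub_C _)
  have hdeg : P.natDegree = n := by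
    rw [hPdef, Polynomial.natDegree_prod]
    · simp
    · intro i _; exact X_sub_C_ne_zero _
  have hd : (Polynomial.derivative^[n] P).natDegree = 0 := by
    have h := Polynomial.natDegree_iterate_derivative P n
    omega
  have hc : (Polynomial.derivative^[n] P).coeff 0 = (n.factorial : ℝ) := by
    rw [Polynomial.coeff_iterate_derivative]
    simp [Nat.descFactorial_self, hdeg ▸ hm.coeff_natDegree]
  rw [Polynomial.eq_C_of_natDegree_le_zero hd.le, hc]
  funext x; simp

lemma my_iteratedDeriv_sub {n : ℕ} {f g : ℝ → ℝ} (hf : ContDiff ℝ ∞ f) (hg : ContDiff ℝ ∞ g) :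
    iteratedDeriv n (f - g) = iteratedDeriv n f - iteratedDeriv n g := by
  funext x
  rw [← iteratedDerivWithin_univ, ← iteratedDerivWithin_univ, ← iteratedDerivWithin_univ]
  exact iteratedDerivWithin_sub (Set.mem_univ x) uniqueDiffOn_univ
    (hf.contDiffWithinAt.of_le (by exact_mod_cast le_top))
    (hg.contDiffWithinAt.of_le (by exact_mod_cast le_top))

lemma my_iteratedDeriv_const_mul {n : ℕ} {f : ℝ → ℝ} (c : ℝ) (hf : ContDiff ℝ ∞ f) :
    iteratedDeriv n (fun z => c * f z) = fun z => c * iteratedDeriv n f z := by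
  funext x
  rw [← iteratedDerivWithin_univ, ← iteratedDerivWithin_univ]
  exact iteratedDerivWithin_const_mul (Set.mem_univ x) uniqueDiffOn_univ c
    (hf.contDiffWithinAt.of_le (by exact_mod_cast le_top))

/-- Newton-form bound: a smooth function vanishing at `n` increasing nodes is bounded by
`M/n! * ∏ |s - t i|`, where `M` bounds the `n`-th derivative. -/
lemma newton_bound (n : ℕ) (f : ℝ → ℝ) (hf : ContDiff ℝ ∞ f) (R M : ℝ)
    (t : Fin n → ℝ) (ht : StrictMono t) (h0 : ∀ i, f (t i) = 0)
    (htR : ∀ i, t i ∈ Set.Icc (-R) R) (s : ℝ) (hs : s ∈ Set.Icc (-R) R)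
    (hM : ∀ ξ ∈ Set.Icc (-R) R, |iteratedDeriv n f ξ| ≤ M) :
    |f s| ≤ M / n.factorial * ∏ i, |s - t i| := by
  have hM0 : 0 ≤ M := le_trans (abs_nonneg _) (hM s hs)
  by_cases hsn : ∃ i, s = t i
  · obtain ⟨i, hi⟩ := hsn
    rw [hi, h0 i, abs_zero]
    have : (0:ℝ) ≤ ∏ j, |t i - t j| := Finset.prod_nonneg fun j _ => abs_nonneg _
    positivity
  · push_neg at hsn
    have hprodne : (∏ i, (s - t i)) ≠ 0 :=
      Finset.prod_ne_zero_iff.mpr fun i _ => sub_ne_zero.mpr (hsn i)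
    set lam : ℝ := f s / (∏ i, (s - t i)) with hlam
    set ψ : ℝ → ℝ := (fun u => f u) - (fun u => lam * ∏ i, (u - t i)) with hψ
    have hnodal : ContDiff ℝ ∞ (fun u : ℝ => ∏ i, (u - t i)) :=
      contDiff_prod fun i _ => contDiff_id.sub contDiff_const
    have hψc : ContDiff ℝ ∞ ψ := hf.sub (contDiff_const.mul hnodal)
    have hψs : ψ s = 0 := by
      simp only [hψ, Pi.sub_apply, hlam]
      field_simp
      ring
    have hψt : ∀ i, ψ (t i) = 0 := by
      intro i
      simp only [hψ, Pi.sub_apply, h0 i]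
      have hz : (∏ j, (t i - t j)) = 0 :=
        Finset.prod_eq_zero (Finset.mem_univ i) (sub_self (t i))
      rw [hz]; ring
    -- sorted enumeration of the n+1 points
    set S : Finset ℝ := insert s (Finset.image t Finset.univ) with hS
    have hcard : S.card = n + 1 := by
      rw [hS, Finset.card_insert_of_notMem (by
        simp only [Finset.mem_image, Finset.mem_univ, true_and]
        rintro ⟨i, hi⟩; exact hsn i hi.symm),
        Finset.card_image_of_injective _ ht.injective]
      simp
    set e : Fin (n+1) → ℝ := fun i => ((S.orderIsoOfFin hcard i : ℝ)) with he
    have hemono : StrictMono e := fun i j hij => by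
      exact_mod_cast (S.orderIsoOfFin hcard).strictMono hij
    have heS : ∀ i, e i ∈ S := fun i => (S.orderIsoOfFin hcard i).2
    have hψe : ∀ i, ψ (e i) = 0 := by
      intro i
      rcases Finset.mem_insert.mp (heS i) with h | h
      · rw [h]; exact hψs
      · obtain ⟨j, _, hj⟩ := Finset.mem_image.mp h
        rw [← hj]; exact hψt j
    obtain ⟨ξ, hξmem, hξ0⟩ := rolle_iterated n ψ hψc e hemono hψe
    have hSR : ∀ z ∈ S, z ∈ Set.Icc (-R) R := by
      intro z hz
      rcases Finset.mem_insert.mp hz with h | h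
      · rwa [h]
      · obtain ⟨j, _, hj⟩ := Finset.mem_image.mp h
        rw [← hj]; exact htR j
    have hξR : ξ ∈ Set.Icc (-R) R :=
      ⟨le_trans (hSR _ (heS 0)).1 hξmem.1, le_trans hξmem.2 (hSR _ (heS (Fin.last n))).2⟩
    -- compute the n-th derivative of ψ
    have hit : iteratedDeriv n ψ ξ = iteratedDeriv n f ξ - lam * n.factorial := by
      rw [hψ, my_iteratedDeriv_sub hf (contDiff_const.mul hnodal), Pi.sub_apply,
        my_iteratedDeriv_const_mul lam hnodal, nodal_iteratedDeriv]
    have hlameq : iteratedDeriv n f ξ = lam * n.factorial := by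
      rw [hit] at hξ0; linarith
    have hlb : |lam| * n.factorial ≤ M := by
      have h1 := hM ξ hξR
      rw [hlameq, abs_mul, abs_of_nonneg (by positivity : (0:ℝ) ≤ (n.factorial : ℝ))] at h1
      exact h1
    have hfs : f s = lam * ∏ i, (s - t i) := by
      rw [hlam]; field_simp
    rw [hfs, abs_mul, Finset.abs_prod]
    have hfac : (0:ℝ) < n.factorial := by positivity
    have h2 : |lam| ≤ M / n.factorial := by
      rw [le_div_iff₀ hfac]; exact hlb
    exact mul_le_mul_of_nonneg_right h2 (Finset.prod_nonneg fun i _ => abs_nonneg _)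
lemma my_iteratedDeriv_sub' : True := trivial

abbrev Wsp (N : ℕ) := (Fin N → ℝ) × ℝ × ℝ

def unitdir (N : ℕ) (r : Fin N) : Wsp N := (Pi.single r 1, 0, 0)

noncomputable def Dop {N : ℕ} (r : Fin N) (G : Wsp N → ℝ) : Wsp N → ℝ :=
  fun w => fderiv ℝ G w (unitdir N r)

lemma Dop_contDiff {N : ℕ} (r : Fin N) {G : Wsp N → ℝ} (hG : ContDiff ℝ ∞ G) :
    ContDiff ℝ ∞ (Dop r G) :=
  (hG.fderiv_right (le_refl _)).clm_apply contDiff_const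

lemma DopIter_contDiff {N : ℕ} (r : Fin N) (m : ℕ) {G : Wsp N → ℝ} (hG : ContDiff ℝ ∞ G) :
    ContDiff ℝ ∞ ((Dop r)^[m] G) := by
  induction m generalizing G with
  | zero => exact hG
  | succ m ih => rw [Function.iterate_succ_apply]; exact ih (Dop_contDiff r hG)

noncomputable def sl {N : ℕ} (r : Fin N) (w : Wsp N) (u : ℝ) : Wsp N :=
  w + (u - w.1 r) • unitdir N r

lemma sl_fst_self {N : ℕ} (r : Fin N) (w : Wsp N) (u : ℝ) : (sl r w u).1 r = u := by
  simp [sl, unitdir]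

lemma sl_fst_ne {N : ℕ} (r : Fin N) (w : Wsp N) (u : ℝ) {i : Fin N} (hi : i ≠ r) :
    (sl r w u).1 i = w.1 i := by
  simp [sl, unitdir, Pi.single_eq_of_ne hi]

lemma sl_snd {N : ℕ} (r : Fin N) (w : Wsp N) (u : ℝ) : (sl r w u).2 = w.2 := by
  simp [sl, unitdir]

lemma sl_self {N : ℕ} (r : Fin N) (w : Wsp N) : sl r w (w.1 r) = w := by
  simp [sl]

lemma sl_hasDerivAt {N : ℕ} (r : Fin N) (w : Wsp N) (u : ℝ) :
    HasDerivAt (sl r w) (unitdir N r) u := by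
  have h : HasDerivAt (fun u : ℝ => u - w.1 r) 1 u := (hasDerivAt_id u).sub_const _
  show HasDerivAt (fun u => w + (u - w.1 r) • unitdir N r) _ u
  simpa using (h.smul_const (unitdir N r)).const_add w

lemma sl_norm_le {N : ℕ} (r : Fin N) (w : Wsp N) (u : ℝ) {R : ℝ}
    (hw : ‖w‖ ≤ R) (hu : |u| ≤ R) : ‖sl r w u‖ ≤ R := by
  have hR : (0:ℝ) ≤ R := le_trans (abs_nonneg u) hu
  rw [Prod.norm_def]
  refine max_le ?_ ?_
  · rw [pi_norm_le_iff_of_nonneg hR]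
    intro i
    by_cases hi : i = r
    · subst hi; rw [sl_fst_self]; simpa using hu
    · rw [sl_fst_ne r w u hi]
      exact le_trans (norm_le_pi_norm w.1 i) (le_trans (norm_fst_le w) hw)
  · rw [sl_snd]
    exact le_trans (norm_snd_le w) hw

lemma slice_hasDerivAt {N : ℕ} (r : Fin N) {G : Wsp N → ℝ} (hG : ContDiff ℝ ∞ G)
    (w : Wsp N) (u : ℝ) :
    HasDerivAt (fun v => G (sl r w v)) (Dop r G (sl r w u)) u :=
  ((hG.differentiable (by simp)) (sl r w u)).hasFDerivAt.comp_hasDerivAt u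
    (sl_hasDerivAt r w u)

lemma slice_iteratedDeriv {N : ℕ} (r : Fin N) (m : ℕ) {G : Wsp N → ℝ}
    (hG : ContDiff ℝ ∞ G) (w : Wsp N) :
    iteratedDeriv m (fun v => G (sl r w v)) = fun v => ((Dop r)^[m] G) (sl r w v) := by
  induction m generalizing G with
  | zero => simp
  | succ m ih =>
    rw [iteratedDeriv_succ']
    have hder : deriv (fun v => G (sl r w v)) = fun v => (Dop r G) (sl r w v) :=
      funext fun u => (slice_hasDerivAt r hG w u).deriv
    rw [hder, ih (Dop_contDiff r hG), Function.iterate_succ_apply]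

lemma Dop_vanish {N : ℕ} (r : Fin N) {G : Wsp N → ℝ} (hG : ContDiff ℝ ∞ G)
    {i j : Fin N} (hir : i ≠ r) (hjr : j ≠ r)
    (hvan : ∀ w : Wsp N, w.1 i = w.1 j → G w = 0) :
    ∀ w : Wsp N, w.1 i = w.1 j → Dop r G w = 0 := by
  intro w hw
  have hz : (fun v => G (sl r w v)) = fun _ => (0:ℝ) := by
    funext v
    exact hvan _ (by rw [sl_fst_ne r w v hir, sl_fst_ne r w v hjr, hw])
  have h1 : HasDerivAt (fun v => G (sl r w v)) (Dop r G w) (w.1 r) := by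
    have := slice_hasDerivAt r hG w (w.1 r)
    rwa [sl_self] at this
  have h2 : HasDerivAt (fun v => G (sl r w v)) 0 (w.1 r) := by
    rw [hz]; exact hasDerivAt_const _ _
  exact h1.unique h2

lemma DopIter_vanish {N : ℕ} (r : Fin N) (m : ℕ) {G : Wsp N → ℝ} (hG : ContDiff ℝ ∞ G)
    {i j : Fin N} (hir : i ≠ r) (hjr : j ≠ r)
    (hvan : ∀ w : Wsp N, w.1 i = w.1 j → G w = 0) :
    ∀ w : Wsp N, w.1 i = w.1 j → ((Dop r)^[m] G) w = 0 := by
  induction m generalizing G with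
  | zero => exact hvan
  | succ m ih =>
    rw [Function.iterate_succ_apply]
    exact ih (Dop_contDiff r hG) (Dop_vanish r hG hir hjr hvan)

/-- Main multivariate bound, by downward induction on `r`: a smooth function vanishing on
all diagonals `{w.1 i = w.1 j}` with `r ≤ j < i` is bounded by a constant times the product
of `|w.1 i - w.1 j|` over those pairs, on any ball. -/
lemma multi_aux (N : ℕ) : ∀ (d r : ℕ), N ≤ r + d → ∀ (G : Wsp N → ℝ), ContDiff ℝ ∞ G →
    (∀ i j : Fin N, r ≤ (j : ℕ) → j < i → ∀ w : Wsp N, w.1 i = w.1 j → G w = 0) →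
    ∀ R : ℝ, 0 < R → ∃ C, 0 ≤ C ∧ ∀ w : Wsp N, ‖w‖ ≤ R →
      |G w| ≤ C * ∏ i : Fin N, ∏ j ∈ (Finset.Iio i).filter (fun j : Fin N => r ≤ (j:ℕ)),
        |w.1 i - w.1 j| := by
  intro d
  induction d with
  | zero =>
    intro r hr G hG _ R hR
    obtain ⟨C, hC⟩ := (isCompact_closedBall (0 : Wsp N) R).exists_bound_of_continuousOn
      hG.continuous.continuousOn
    have hC0 : 0 ≤ C := le_trans (norm_nonneg _) (hC 0 (Metric.mem_closedBall_self hR.le))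
    refine ⟨C, hC0, fun w hw => ?_⟩
    have h1 : ∀ i : Fin N, (Finset.Iio i).filter (fun j : Fin N => r ≤ (j:ℕ)) = ∅ := by
      intro i
      apply Finset.filter_false_of_mem
      intro j _
      have := j.2
      omega
    have h2 : (∏ i : Fin N, ∏ j ∈ (Finset.Iio i).filter (fun j : Fin N => r ≤ (j:ℕ)),
        |w.1 i - w.1 j|) = 1 := by
      apply Finset.prod_eq_one
      intro i _
      rw [h1 i, Finset.prod_empty]
    rw [h2, mul_one]
    exact hC w (mem_closedBall_zero_iff.mpr hw)
  | succ d ih =>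
    intro r hrd G hG hvan R hR
    by_cases hNr : N ≤ r + d
    · exact ih r hNr G hG hvan R hR
    have hrN : r < N := by omega
    have hNd : N = r + d + 1 := by omega
    set rr : Fin N := ⟨r, hrN⟩ with hrr
    set G' : Wsp N → ℝ := (Dop rr)^[d] G with hG'def
    have hG' : ContDiff ℝ ∞ G' := DopIter_contDiff rr d hG
    have hvan' : ∀ i j : Fin N, r + 1 ≤ (j : ℕ) → j < i → ∀ w : Wsp N,
        w.1 i = w.1 j → G' w = 0 := by
      intro i j hj hij
      have hjr : j ≠ rr := by
        intro h; rw [h] at hj; simp [hrr] at hj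
      have hir : i ≠ rr := by
        intro h
        rw [Fin.lt_def, h] at hij
        simp only [hrr] at hij
        omega
      exact DopIter_vanish rr d hG hir hjr (hvan i j (by omega) hij)
    obtain ⟨C', hC'0, hC'⟩ := ih (r+1) (by omega) G' hG' hvan' R hR
    refine ⟨C' / d.factorial, by positivity, ?_⟩
    intro w hw
    by_cases hcoll : ∃ i j : Fin N, r ≤ (j:ℕ) ∧ j < i ∧ w.1 i = w.1 j
    · obtain ⟨i, j, h1, h2, h3⟩ := hcoll
      rw [hvan i j h1 h2 w h3, abs_zero]
      have : (0:ℝ) ≤ ∏ i : Fin N, ∏ j ∈ (Finset.Iio i).filter (fun j : Fin N => r ≤ (j:ℕ)),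
          |w.1 i - w.1 j| :=
        Finset.prod_nonneg fun i _ => Finset.prod_nonneg fun j _ => abs_nonneg _
      positivity
    push_neg at hcoll
    -- the nodes : the values of `w.1` above index `rr`, which are pairwise distinct
    have hinj : Set.InjOn (fun i => w.1 i) (Finset.Ioi rr) := by
      intro i hi j hj hij
      simp only [Finset.coe_Ioi, Set.mem_Ioi] at hi hj
      by_contra hne
      rcases lt_or_gt_of_ne hne with h | h
      · exact hcoll j i (by have := (Fin.lt_def).mp hi; simp only [hrr] at this; omega) h hij.symm
      · exact hcoll i j (by have := (Fin.lt_def).mp hj; simp only [hrr] at this; omega) h hij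
    set T : Finset ℝ := (Finset.Ioi rr).image (fun i => w.1 i) with hT
    have hTcard : T.card = d := by
      rw [hT, Finset.card_image_of_injOn hinj, Fin.card_Ioi]
      simp only [hrr]
      omega
    set t : Fin d → ℝ := fun i => ((T.orderIsoOfFin hTcard i : ℝ)) with ht
    have htmono : StrictMono t := fun i j hij => by
      exact_mod_cast (T.orderIsoOfFin hTcard).strictMono hij
    have htT : ∀ i, t i ∈ T := fun i => (T.orderIsoOfFin hTcard i).2
    set f : ℝ → ℝ := fun u => G (sl rr w u) with hfdef
    have hslc : ContDiff ℝ ∞ (sl rr w) := by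
      apply contDiff_const.add
      exact ContDiff.smul (contDiff_id.sub contDiff_const) contDiff_const
    have hfc : ContDiff ℝ ∞ f := hG.comp hslc
    have hf0 : ∀ i, f (t i) = 0 := by
      intro i
      obtain ⟨j, hjmem, hj⟩ := Finset.mem_image.mp (htT i)
      simp only [Finset.mem_Ioi] at hjmem
      have hjr : j ≠ rr := ne_of_gt hjmem
      apply hvan j rr (le_refl _) hjmem
      rw [sl_fst_ne rr w _ hjr, sl_fst_self, hj]
    have hwc : ∀ i : Fin N, |w.1 i| ≤ R :=
      fun i => le_trans (norm_le_pi_norm w.1 i) (le_trans (norm_fst_le w) hw)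
    have htR : ∀ i, t i ∈ Set.Icc (-R) R := by
      intro i
      obtain ⟨j, _, hj⟩ := Finset.mem_image.mp (htT i)
      rw [← hj]
      exact abs_le.mp (hwc j)
    set s : ℝ := w.1 rr with hs
    have hsR : s ∈ Set.Icc (-R) R := abs_le.mp (hwc rr)
    -- the inner product (pairs with j ≥ r+1) is unchanged along the slice
    set P' : ℝ := ∏ i : Fin N, ∏ j ∈ (Finset.Iio i).filter (fun j : Fin N => r + 1 ≤ (j:ℕ)),
      |w.1 i - w.1 j| with hP'
    have hP'0 : 0 ≤ P' := Finset.prod_nonneg fun i _ => Finset.prod_nonneg fun j _ => abs_nonneg _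
    have hM : ∀ ξ ∈ Set.Icc (-R) R, |iteratedDeriv d f ξ| ≤ C' * P' := by
      intro ξ hξ
      rw [hfdef, slice_iteratedDeriv rr d hG w]
      have hnorm : ‖sl rr w ξ‖ ≤ R := sl_norm_le rr w ξ hw (abs_le.mpr hξ)
      refine le_trans (hC' (sl rr w ξ) hnorm) ?_
      apply le_of_eq
      congr 1
      rw [hP']
      apply Finset.prod_congr rfl
      intro i _
      apply Finset.prod_congr rfl
      intro j hj
      simp only [Finset.mem_filter, Finset.mem_Iio] at hj
      have hjr : j ≠ rr := by
        intro h; rw [h] at hj; simp only [hrr] at hj; omega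
      have hir : i ≠ rr := by
        intro h
        have := (Fin.lt_def).mp hj.1
        rw [h] at this; simp only [hrr] at this; omega
      rw [sl_fst_ne rr w _ hjr, sl_fst_ne rr w _ hir]
    have hnewton := newton_bound d f hfc R (C' * P') t htmono hf0 htR s hsR hM
    have hfs : f s = G w := by simp only [hfdef, hs, sl_self]
    -- identify the node product
    have hnodeprod : (∏ i, |s - t i|) = ∏ j ∈ Finset.Ioi rr, |s - w.1 j| := by
      have h1 : (∏ i, |s - t i|) = ∏ z ∈ T, |s - z| := by
        rw [← Finset.prod_coe_sort T (fun z => |s - (z:ℝ)|)]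
        exact Equiv.prod_comp (T.orderIsoOfFin hTcard).toEquiv (fun z : T => |s - (z:ℝ)|)
      rw [h1, hT, Finset.prod_image hinj]
    -- split the full product
    have hsplit : (∏ i : Fin N, ∏ j ∈ (Finset.Iio i).filter (fun j : Fin N => r ≤ (j:ℕ)),
        |w.1 i - w.1 j|) = P' * ∏ j ∈ Finset.Ioi rr, |s - w.1 j| := by
      have hfs1 : ∀ i : Fin N, (Finset.Iio i).filter (fun j : Fin N => r ≤ (j:ℕ))
          = ((Finset.Iio i).filter (fun j : Fin N => r + 1 ≤ (j:ℕ))) ∪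
            ((Finset.Iio i).filter (fun j => j = rr)) := by
        intro i
        ext j
        simp only [Finset.mem_filter, Finset.mem_union, Finset.mem_Iio]
        constructor
        · rintro ⟨hji, hrj⟩
          by_cases hjr : (j:ℕ) = r
          · exact Or.inr ⟨hji, Fin.ext hjr⟩
          · exact Or.inl ⟨hji, by omega⟩
        · rintro (⟨hji, hrj⟩ | ⟨hji, hjr⟩)
          · exact ⟨hji, by omega⟩
          · refine ⟨hji, ?_⟩
            rw [hjr]
      have hdisj : ∀ i : Fin N, Disjoint ((Finset.Iio i).filter (fun j : Fin N => r + 1 ≤ (j:ℕ)))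
          ((Finset.Iio i).filter (fun j => j = rr)) := by
        intro i
        rw [Finset.disjoint_filter]
        intro j _ hj1 hj2
        rw [hj2] at hj1
        simp only [hrr] at hj1
        omega
      calc (∏ i : Fin N, ∏ j ∈ (Finset.Iio i).filter (fun j : Fin N => r ≤ (j:ℕ)), |w.1 i - w.1 j|)
          = ∏ i : Fin N, ((∏ j ∈ (Finset.Iio i).filter (fun j : Fin N => r + 1 ≤ (j:ℕ)),
              |w.1 i - w.1 j|) * ∏ j ∈ (Finset.Iio i).filter (fun j => j = rr),
              |w.1 i - w.1 j|) := by
            apply Finset.prod_congr rfl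
            intro i _
            rw [hfs1 i, Finset.prod_union (hdisj i)]
        _ = P' * ∏ i : Fin N, ∏ j ∈ (Finset.Iio i).filter (fun j => j = rr),
              |w.1 i - w.1 j| := by
            rw [Finset.prod_mul_distrib, hP']
        _ = P' * ∏ j ∈ Finset.Ioi rr, |s - w.1 j| := by
            congr 1
            have h2 : ∀ i : Fin N, (Finset.Iio i).filter (fun j => j = rr)
                = if rr < i then {rr} else ∅ := by
              intro i
              rw [Finset.filter_eq']
              simp [Finset.mem_Iio]
            calc (∏ i : Fin N, ∏ j ∈ (Finset.Iio i).filter (fun j => j = rr), |w.1 i - w.1 j|)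
                = ∏ i : Fin N, (if rr < i then |w.1 i - w.1 rr| else 1) := by
                  apply Finset.prod_congr rfl
                  intro i _
                  rw [h2 i]
                  by_cases h : rr < i
                  · rw [if_pos h, if_pos h, Finset.prod_singleton]
                  · rw [if_neg h, if_neg h, Finset.prod_empty]
              _ = ∏ i ∈ Finset.univ.filter (fun i => rr < i), |w.1 i - w.1 rr| :=
                  (Finset.prod_filter _ _).symm
              _ = ∏ j ∈ Finset.Ioi rr, |s - w.1 j| := by
                  have : Finset.univ.filter (fun i => rr < i) = Finset.Ioi rr := by
                    ext i; simp
                  rw [this, hs]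
                  exact Finset.prod_congr rfl fun i _ => abs_sub_comm _ _
    rw [← hfs, hsplit]
    calc |f s| ≤ C' * P' / d.factorial * ∏ i, |s - t i| := hnewton
      _ = C' / d.factorial * (P' * ∏ j ∈ Finset.Ioi rr, |s - w.1 j|) := by
          rw [hnodeprod]; ring

lemma isBigO_finset_prod {ι α : Type*} (L : Filter α) (s : Finset ι) (f g : ι → α → ℝ)
    (h : ∀ i ∈ s, (f i) =O[L] (g i)) :
    (fun l => ∏ i ∈ s, f i l) =O[L] (fun l => ∏ i ∈ s, g i l) := by
  classical
  induction s using Finset.cons_induction with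
  | empty => simpa using isBigO_refl (fun _ : α => (1:ℝ)) L
  | cons i s his ih =>
    simp only [Finset.prod_cons]
    exact (h i (Finset.mem_cons_self _ _)).mul
      (ih fun j hj => h j (Finset.mem_cons.mpr (Or.inr hj)))
/-- Consider a smooth block-invariant response function
`F(Y, X; λ)` with `F(0,0;0) = 0` and `a := ∂F/∂Y(0,0;0) ≠ 0`. Given a finite set of exponents
`Υ ⊂ (0,∞)` closed (up to the threshold `p̄ + ε`) under sums and containing the pairwise
separation exponents `p_{i,j}` of a fully synchrony-breaking branch `x(λ)` (each component of
which, as well as the solutions `y_0(λ), y_1(λ)` of the steady state equations for the two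
added nodes, has a power expansion with exponents in `Υ` up to `O(λ^{p̄+ε})`), the difference
of the two solutions satisfies `y_0(λ) − y_1(λ) = O(λ^{p̄})` as `λ → 0⁺`, where
`p̄ = ∑_{j<i} p_{i,j}` is the order of asynchrony. -/
theorem reluctant_difference_isBigO (k : ℕ) (hk : 2 ≤ k)
    (F : ℝ × ({σ : Equiv.Perm (Fin (k + 1)) // Equiv.Perm.sign σ = 1} → (Fin k → ℝ)) × ℝ → ℝ)
    (hF : ContDiff ℝ (⊤ : ℕ∞) F)
    (hinv : ∀ (Y : ℝ)
      (X : {σ : Equiv.Perm (Fin (k + 1)) // Equiv.Perm.sign σ = 1} → (Fin k → ℝ)) (l : ℝ)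
      (π : Equiv.Perm {σ : Equiv.Perm (Fin (k + 1)) // Equiv.Perm.sign σ = 1}),
      F (Y, fun σ => X (π σ), l) = F (Y, X, l))
    (hF0 : F (0, 0, 0) = 0)
    (ha : deriv (fun Y : ℝ => F (Y, 0, 0)) 0 ≠ 0)
    (Υ : Finset ℝ) (hΥpos : ∀ q ∈ Υ, 0 < q) (ε : ℝ) (hε : 0 < ε)
    (p : Fin (k + 1) → Fin (k + 1) → ℝ)
    (hpmem : ∀ i j : Fin (k + 1), j < i → p i j ∈ Υ)
    (hΥle : ∀ q ∈ Υ, q ≤ ∑ i : Fin (k + 1), ∑ j ∈ Finset.Iio i, p i j)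
    (hΥadd : ∀ q ∈ Υ, ∀ r ∈ Υ,
      q + r ∈ Υ ∨ (∑ i : Fin (k + 1), ∑ j ∈ Finset.Iio i, p i j) + ε ≤ q + r)
    (hΥone : (1 : ℝ) ∈ Υ ∨ (∑ i : Fin (k + 1), ∑ j ∈ Finset.Iio i, p i j) + ε ≤ 1)
    (δ : ℝ) (hδ : 0 < δ)
    (x : Fin (k + 1) → ℝ → ℝ) (A : Fin (k + 1) → ℝ → ℝ)
    (hx : ∀ i : Fin (k + 1),
      (fun l => x i l - ∑ q ∈ Υ, A i q * l ^ q) =O[𝓝[Set.Ioo (0:ℝ) δ] 0]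
        (fun l => l ^ ((∑ i : Fin (k + 1), ∑ j ∈ Finset.Iio i, p i j) + ε)))
    (D : Fin (k + 1) → Fin (k + 1) → ℝ) (hD : ∀ i j : Fin (k + 1), j < i → D i j ≠ 0)
    (hdiff : ∀ i j : Fin (k + 1), j < i →
      (fun l => x i l - x j l - D i j * l ^ p i j) =o[𝓝[Set.Ioo (0:ℝ) δ] 0]
        (fun l => l ^ p i j))
    (y0 y1 : ℝ → ℝ) (B : Fin 2 → ℝ → ℝ)
    (hy0 : (fun l => y0 l - ∑ q ∈ Υ, B 0 q * l ^ q) =O[𝓝[Set.Ioo (0:ℝ) δ] 0]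
      (fun l => l ^ ((∑ i : Fin (k + 1), ∑ j ∈ Finset.Iio i, p i j) + ε)))
    (hy1 : (fun l => y1 l - ∑ q ∈ Υ, B 1 q * l ^ q) =O[𝓝[Set.Ioo (0:ℝ) δ] 0]
      (fun l => l ^ ((∑ i : Fin (k + 1), ∑ j ∈ Finset.Iio i, p i j) + ε)))
    (heq0 : ∀ l ∈ Set.Ico (0:ℝ) δ, F (y0 l, fun σ i => x (σ.1 i.succ) l, l) = 0)
    (heq1 : ∀ l ∈ Set.Ico (0:ℝ) δ,
      F (y1 l, fun σ i => x (Equiv.swap 0 1 (σ.1 i.succ)) l, l) = 0) :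
    (fun l => y0 l - y1 l) =O[𝓝[Set.Ioo (0:ℝ) δ] 0]
      (fun l => l ^ (∑ i : Fin (k + 1), ∑ j ∈ Finset.Iio i, p i j)) := by
  classical
  have hFs : ContDiff ℝ ∞ F := hF.of_le (by simp)
  set pbar : ℝ := ∑ i : Fin (k + 1), ∑ j ∈ Finset.Iio i, p i j with hpbar
  set 𝓕 : Filter ℝ := 𝓝[Set.Ioo (0:ℝ) δ] 0 with h𝓕
  have h01 : (0 : Fin (k+1)) ≠ 1 := by
    have hv1 : ((1 : Fin (k+1)) : ℕ) = 1 := by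
      rw [Fin.val_one']
      exact Nat.mod_eq_of_lt (by omega)
    intro h
    have h2 := congrArg Fin.val h
    rw [Fin.val_zero, hv1] at h2
    exact one_ne_zero h2.symm
  -- the antisymmetrized function Φ
  set Φ : Wsp (k+1) → ℝ := fun v =>
    F (v.2.1, fun σ i => v.1 (σ.1 i.succ), v.2.2) -
    F (v.2.1, fun σ i => v.1 (Equiv.swap 0 1 (σ.1 i.succ)), v.2.2) with hΦdef
  have hproj : ∀ (m : Fin (k+1)), ContDiff ℝ ∞ (fun v : Wsp (k+1) => v.1 m) := by
    intro m
    exact ((ContinuousLinearMap.proj m : (Fin (k+1) → ℝ) →L[ℝ] ℝ).contDiff).comp contDiff_fst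
  have hargs : ∀ (g : {σ : Equiv.Perm (Fin (k + 1)) // Equiv.Perm.sign σ = 1}
      → Fin k → Fin (k+1)),
      ContDiff ℝ ∞ (fun v : Wsp (k+1) =>
        ((v.2.1, fun σ i => v.1 (g σ i), v.2.2) :
          ℝ × ({σ : Equiv.Perm (Fin (k + 1)) // Equiv.Perm.sign σ = 1}
            → (Fin k → ℝ)) × ℝ)) :=
    fun g => contDiff_snd.fst.prodMk ((contDiff_pi.2 fun σ => contDiff_pi.2 fun i =>
      hproj (g σ i)).prodMk contDiff_snd.snd)
  have hΦ : ContDiff ℝ ∞ Φ :=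
    (hFs.comp (hargs (fun σ i => σ.1 i.succ))).sub
      (hFs.comp (hargs (fun σ i => Equiv.swap 0 1 (σ.1 i.succ))))
  -- Φ vanishes on every diagonal
  have hvanΦ : ∀ i j : Fin (k+1), (0:ℕ) ≤ (j:ℕ) → j < i → ∀ v : Wsp (k+1),
      v.1 i = v.1 j → Φ v = 0 := by
    intro a b _ hlt v hab
    have hne : a ≠ b := ne_of_gt hlt
    have hswapv : ∀ m, v.1 (Equiv.swap a b m) = v.1 m := by
      intro m
      rcases eq_or_ne m a with rfl | hma
      · rw [Equiv.swap_apply_left]; exact hab.symm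
      rcases eq_or_ne m b with rfl | hmb
      · rw [Equiv.swap_apply_right]; exact hab
      · rw [Equiv.swap_apply_of_ne_of_ne hma hmb]
    set π : Equiv.Perm {σ : Equiv.Perm (Fin (k + 1)) // Equiv.Perm.sign σ = 1} :=
      { toFun := fun σ => ⟨Equiv.swap 0 1 * (Equiv.swap a b * σ.1), by
          simp [Equiv.Perm.sign_mul, Equiv.Perm.sign_swap h01, Equiv.Perm.sign_swap hne, σ.2]⟩,
        invFun := fun σ => ⟨Equiv.swap a b * (Equiv.swap 0 1 * σ.1), by
          simp [Equiv.Perm.sign_mul, Equiv.Perm.sign_swap h01, Equiv.Perm.sign_swap hne, σ.2]⟩,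
        left_inv := fun σ => Subtype.ext (by
          simp [Equiv.swap_mul_self_mul]),
        right_inv := fun σ => Subtype.ext (by
          simp [Equiv.swap_mul_self_mul]) } with hπdef
    have hkey := hinv v.2.1 (fun σ i => v.1 (Equiv.swap 0 1 (σ.1 i.succ))) v.2.2 π
    have hfun : (fun σ => (fun (σ' : {σ : Equiv.Perm (Fin (k + 1)) //
        Equiv.Perm.sign σ = 1}) (i : Fin k) => v.1 (Equiv.swap 0 1 (σ'.1 i.succ))) (π σ))
        = fun σ i => v.1 (σ.1 i.succ) := by
      funext σ i
      simp only [hπdef, Equiv.coe_fn_mk, Equiv.Perm.mul_apply, Equiv.swap_apply_self]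
      exact hswapv _
    rw [hΦdef]
    simp only
    rw [sub_eq_zero, ← hkey, hfun]
  -- bound for Φ near 0 coming from the diagonal vanishing
  obtain ⟨C, hC0, hbound⟩ := multi_aux (k+1) (k+1) 0 (by omega) Φ hΦ
    (fun i j _ hij => hvanΦ i j (Nat.zero_le _) hij) 1 one_pos
  have hfilt : ∀ i : Fin (k+1),
      (Finset.Iio i).filter (fun j : Fin (k+1) => (0:ℕ) ≤ (j:ℕ)) = Finset.Iio i :=
    fun i => Finset.filter_true_of_mem (fun _ _ => Nat.zero_le _)
  -- basic limits
  have hppos : ∀ i : Fin (k+1), ∀ j ∈ Finset.Iio i, 0 < p i j :=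
    fun i j hj => hΥpos _ (hpmem i j (Finset.mem_Iio.mp hj))
  have hpbar0 : 0 ≤ pbar := by
    rw [hpbar]
    exact Finset.sum_nonneg fun i _ => Finset.sum_nonneg fun j hj => (hppos i j hj).le
  have hrpow0 : ∀ q : ℝ, 0 < q → Filter.Tendsto (fun l : ℝ => l ^ q) 𝓕 (𝓝 0) := by
    intro q hq
    have hc : ContinuousAt (fun z : ℝ => z ^ q) 0 :=
      Real.continuousAt_rpow_const 0 q (Or.inr hq.le)
    have h2 := hc.tendsto
    rw [Real.zero_rpow hq.ne'] at h2
    exact h2.mono_left nhdsWithin_le_nhds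
  have hser : ∀ (c : ℝ → ℝ), Filter.Tendsto (fun l => ∑ q ∈ Υ, c q * l ^ q) 𝓕 (𝓝 0) := by
    intro c
    have h1 : Filter.Tendsto (fun l : ℝ => ∑ q ∈ Υ, c q * l ^ q) 𝓕 (𝓝 (∑ q ∈ Υ, (0:ℝ))) :=
      tendsto_finset_sum _ (fun q hq => by
        simpa using (hrpow0 q (hΥpos q hq)).const_mul (c q))
    simpa using h1
  have htend : ∀ (f : ℝ → ℝ) (c : ℝ → ℝ),
      (fun l => f l - ∑ q ∈ Υ, c q * l ^ q) =O[𝓕] (fun l => l ^ (pbar + ε)) →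
      Filter.Tendsto f 𝓕 (𝓝 0) := by
    intro f c hO
    have h2 : Filter.Tendsto (fun l => f l - ∑ q ∈ Υ, c q * l ^ q) 𝓕 (𝓝 0) :=
      hO.trans_tendsto (hrpow0 _ (by linarith))
    have h3 := h2.add (hser c)
    simp only [sub_add_cancel, add_zero] at h3
    exact h3
  have hxt : ∀ i, Filter.Tendsto (x i) 𝓕 (𝓝 0) := fun i => htend (x i) (A i) (hx i)
  have hy0t : Filter.Tendsto y0 𝓕 (𝓝 0) := htend y0 (B 0) hy0
  have hy1t : Filter.Tendsto y1 𝓕 (𝓝 0) := htend y1 (B 1) hy1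
  set xv : ℝ → Fin (k+1) → ℝ := fun l i => x i l with hxv
  have hxvt : Filter.Tendsto xv 𝓕 (𝓝 0) := by
    rw [tendsto_pi_nhds]
    intro i
    simpa [hxv] using hxt i
  set wv : ℝ → Wsp (k+1) := fun l => (xv l, y1 l, l) with hwv
  have hwv1 : ∀ l (j : Fin (k+1)), (wv l).1 j = x j l := fun l j => by rw [hwv]
  have hlt : Filter.Tendsto (fun l : ℝ => l) 𝓕 (𝓝 0) :=
    tendsto_id.mono_left nhdsWithin_le_nhds
  have hwt : Filter.Tendsto wv 𝓕 (𝓝 (0 : Wsp (k+1))) :=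
    hxvt.prodMk_nhds (hy1t.prodMk_nhds hlt)
  have hev1 : ∀ᶠ l in 𝓕, ‖wv l‖ ≤ 1 := by
    filter_upwards [hwt (Metric.closedBall_mem_nhds (0 : Wsp (k+1)) one_pos)] with l hl
    exact mem_closedBall_zero_iff.mp hl
  have hIoo : ∀ᶠ l in 𝓕, l ∈ Set.Ioo (0:ℝ) δ := eventually_mem_nhdsWithin
  -- the product of the differences is O(λ^pbar)
  have hpairO : ∀ i j : Fin (k+1), j < i →
      (fun l => x i l - x j l) =O[𝓕] fun l => l ^ p i j := by
    intro i j hij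
    have h1 := (hdiff i j hij).isBigO
    have h2 : (fun l : ℝ => D i j * l ^ p i j) =O[𝓕] fun l => l ^ p i j :=
      (isBigO_refl _ _).const_mul_left _
    have h3 := h1.add h2
    simp only [sub_add_cancel] at h3
    exact h3
  have houter : (fun l => ∏ i : Fin (k+1), ∏ j ∈ Finset.Iio i, (x i l - x j l))
      =O[𝓕] (fun l => ∏ i : Fin (k+1), ∏ j ∈ Finset.Iio i, l ^ p i j) := by
    refine isBigO_finset_prod 𝓕 Finset.univ
      (fun i l => ∏ j ∈ Finset.Iio i, (x i l - x j l))
      (fun i l => ∏ j ∈ Finset.Iio i, l ^ p i j) ?_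
    intro i _
    exact isBigO_finset_prod 𝓕 (Finset.Iio i) (fun j l => x i l - x j l)
      (fun j l => l ^ p i j) (fun j hj => hpairO i j (Finset.mem_Iio.mp hj))
  have hprodEq : (fun l : ℝ => ∏ i : Fin (k+1), ∏ j ∈ Finset.Iio i, l ^ p i j)
      =ᶠ[𝓕] (fun l => l ^ pbar) := by
    filter_upwards [hIoo] with l hl
    rw [hpbar, Real.rpow_sum_of_pos hl.1]
    exact Finset.prod_congr rfl fun i _ => (Real.rpow_sum_of_pos hl.1 _ _).symm
  have hΦO : (fun l => Φ (wv l)) =O[𝓕] (fun l => l ^ pbar) := by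
    have h1 : (fun l => Φ (wv l)) =O[𝓕]
        (fun l => ∏ i : Fin (k+1), ∏ j ∈ Finset.Iio i, (x i l - x j l)) := by
      rw [isBigO_iff]
      refine ⟨C, ?_⟩
      filter_upwards [hev1] with l hl
      have h2 := hbound (wv l) hl
      rw [Real.norm_eq_abs, Real.norm_eq_abs]
      calc |Φ (wv l)| ≤ C * ∏ i : Fin (k+1), ∏ j ∈ (Finset.Iio i).filter
            (fun j : Fin (k+1) => (0:ℕ) ≤ (j:ℕ)), |(wv l).1 i - (wv l).1 j| := h2
        _ = C * ∏ i : Fin (k+1), ∏ j ∈ Finset.Iio i, |x i l - x j l| := by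
            simp only [hwv1]
            congr 1
            exact Finset.prod_congr rfl fun i _ => by rw [hfilt i]
        _ = C * |∏ i : Fin (k+1), ∏ j ∈ Finset.Iio i, (x i l - x j l)| := by
            rw [Finset.abs_prod]
            congr 1
            exact Finset.prod_congr rfl fun i _ => (Finset.abs_prod _ _).symm
    exact h1.trans (houter.trans_eventuallyEq hprodEq)
  -- the function H and its partial derivative in the first variable
  set H : ℝ × (Fin (k+1) → ℝ) × ℝ → ℝ :=
    fun z => F (z.1, fun σ i => z.2.1 (σ.1 i.succ), z.2.2) with hHdef
  have hproj2 : ∀ (m : Fin (k+1)),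
      ContDiff ℝ ∞ (fun z : ℝ × (Fin (k+1) → ℝ) × ℝ => z.2.1 m) := by
    intro m
    exact ((ContinuousLinearMap.proj m : (Fin (k+1) → ℝ) →L[ℝ] ℝ).contDiff).comp
      contDiff_snd.fst
  have hHs : ContDiff ℝ ∞ H := by
    rw [hHdef]
    apply hFs.comp
    exact contDiff_fst.prodMk ((contDiff_pi.2 fun (σ : {σ : Equiv.Perm (Fin (k + 1)) // Equiv.Perm.sign σ = 1}) => contDiff_pi.2 fun (i : Fin k) =>
      hproj2 (σ.1 i.succ)).prodMk contDiff_snd.snd)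
  set aP : ℝ × (Fin (k+1) → ℝ) × ℝ → ℝ :=
    fun z => fderiv ℝ H z (1, 0, 0) with haPdef
  have haPs : ContDiff ℝ ∞ aP := by
    rw [haPdef]
    exact (hHs.fderiv_right (le_refl _)).clm_apply contDiff_const
  have haPc : Continuous aP := haPs.continuous
  have hcurve : ∀ (yv : ℝ) (xw : Fin (k+1) → ℝ) (lv : ℝ),
      HasDerivAt (fun y => H (y, xw, lv)) (aP (yv, xw, lv)) yv := by
    intro yv xw lv
    have h1 : HasDerivAt (fun y : ℝ => ((y, xw, lv) : ℝ × (Fin (k+1) → ℝ) × ℝ))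
        ((1:ℝ), (0:Fin (k+1) → ℝ), (0:ℝ)) yv :=
      (hasDerivAt_id yv).prodMk (hasDerivAt_const _ _)
    exact ((hHs.differentiable (by simp) (yv, xw, lv)).hasFDerivAt.comp_hasDerivAt
      yv h1)
  set aval : ℝ := aP ((0:ℝ), (0:Fin (k+1) → ℝ), (0:ℝ)) with havaldef
  have havalne : aval ≠ 0 := by
    have h1 : (fun Y : ℝ => H (Y, (0:Fin (k+1) → ℝ), (0:ℝ))) = fun Y : ℝ => F (Y, 0, 0) := by
      funext Y
      rw [hHdef]
      exact rfl
    have h2 := (hcurve 0 0 0).deriv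
    rw [h1] at h2
    rw [havaldef, ← h2]
    exact ha
  have havalpos : 0 < |aval| := abs_pos.mpr havalne
  have hballev : ∀ᶠ z in 𝓝 (((0:ℝ), (0:Fin (k+1) → ℝ), (0:ℝ)) : ℝ × (Fin (k+1) → ℝ) × ℝ),
      |aval| / 2 < |aP z| := by
    have h3 : Filter.Tendsto aP (𝓝 (0, 0, 0)) (𝓝 aval) := haPc.continuousAt
    filter_upwards [h3 (Metric.ball_mem_nhds aval (show (0:ℝ) < |aval|/2 by linarith))] with z hz
    simp only [Set.mem_preimage, Metric.mem_ball, Real.dist_eq] at hz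
    have h5 := abs_sub_abs_le_abs_sub aval (aP z)
    rw [abs_sub_comm] at h5
    linarith
  obtain ⟨ρ₂, hρ₂pos, hball⟩ := Metric.eventually_nhds_iff_ball.mp hballev
  have hevy0 : ∀ᶠ l in 𝓕, |y0 l| < ρ₂ := by
    filter_upwards [hy0t (Metric.ball_mem_nhds (0:ℝ) hρ₂pos)] with l hl
    simp only [Set.mem_preimage, Metric.mem_ball, Real.dist_eq, sub_zero] at hl
    exact hl
  have hevy1 : ∀ᶠ l in 𝓕, |y1 l| < ρ₂ := by
    filter_upwards [hy1t (Metric.ball_mem_nhds (0:ℝ) hρ₂pos)] with l hl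
    simp only [Set.mem_preimage, Metric.mem_ball, Real.dist_eq, sub_zero] at hl
    exact hl
  have hevl : ∀ᶠ l in 𝓕, |l| < ρ₂ := by
    filter_upwards [hlt (Metric.ball_mem_nhds (0:ℝ) hρ₂pos)] with l hl
    simp only [Set.mem_preimage, Metric.mem_ball, Real.dist_eq, sub_zero] at hl
    exact hl
  have hevx : ∀ᶠ l in 𝓕, ‖xv l‖ < ρ₂ := by
    filter_upwards [hxvt (Metric.ball_mem_nhds (0:Fin (k+1) → ℝ) hρ₂pos)] with l hl
    simp only [Set.mem_preimage, mem_ball_zero_iff] at hl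
    exact hl
  -- the main pointwise estimate
  have hkey : ∀ᶠ l in 𝓕, ‖y0 l - y1 l‖ ≤ (2 / |aval|) * ‖Φ (wv l)‖ := by
    filter_upwards [hIoo, hevy0, hevy1, hevl, hevx] with l hl hy0s hy1s hls hxs
    have hlIco : l ∈ Set.Ico (0:ℝ) δ := ⟨hl.1.le, hl.2⟩
    have hφ0 : H (y0 l, xv l, l) = 0 := by
      simp only [hHdef, hxv]
      exact heq0 l hlIco
    have hφ1 : H (y1 l, xv l, l) = Φ (wv l) := by
      simp only [hHdef, hΦdef, hwv, hxv]
      rw [heq1 l hlIco, sub_zero]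
    have hcont1 : Continuous (fun y => H (y, xv l, l)) :=
      hHs.continuous.comp (continuous_id.prodMk continuous_const)
    have hdist : ∀ c : ℝ, |c| < ρ₂ →
        dist ((c, xv l, l) : ℝ × (Fin (k+1) → ℝ) × ℝ) (0, 0, 0) < ρ₂ := by
      intro c hc
      rw [Prod.dist_eq, Prod.dist_eq]
      simp only [Real.dist_eq, sub_zero, dist_zero_right]
      exact max_lt hc (max_lt hxs hls)
    have hmajor : |aval| / 2 * |y0 l - y1 l| ≤ |Φ (wv l)| := by
      rcases lt_trichotomy (y0 l) (y1 l) with hc | hc | hc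
      · obtain ⟨c, hcmem, hceq⟩ := exists_hasDerivAt_eq_slope (fun y => H (y, xv l, l))
          (fun y => aP (y, xv l, l)) hc hcont1.continuousOn
          (fun yv _ => hcurve yv (xv l) l)
        have hcabs : |c| < ρ₂ := by
          rw [abs_lt]
          rw [abs_lt] at hy0s hy1s
          exact ⟨by linarith [hcmem.1], by linarith [hcmem.2]⟩
        have hgt := hball _ (Metric.mem_ball.mpr (hdist c hcabs))
        rw [hφ1, hφ0, sub_zero] at hceq
        have hsub : y1 l - y0 l ≠ 0 := sub_ne_zero.mpr (ne_of_gt hc)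
        have heqn : Φ (wv l) = aP (c, xv l, l) * (y1 l - y0 l) := by
          rw [hceq]
          field_simp
        rw [heqn, abs_mul, abs_sub_comm (y0 l) (y1 l)]
        exact mul_le_mul_of_nonneg_right hgt.le (abs_nonneg _)
      · rw [hc, sub_self, abs_zero, mul_zero]
        exact abs_nonneg _
      · obtain ⟨c, hcmem, hceq⟩ := exists_hasDerivAt_eq_slope (fun y => H (y, xv l, l))
          (fun y => aP (y, xv l, l)) hc hcont1.continuousOn
          (fun yv _ => hcurve yv (xv l) l)
        have hcabs : |c| < ρ₂ := by
          rw [abs_lt]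
          rw [abs_lt] at hy0s hy1s
          exact ⟨by linarith [hcmem.1], by linarith [hcmem.2]⟩
        have hgt := hball _ (Metric.mem_ball.mpr (hdist c hcabs))
        rw [hφ1, hφ0, zero_sub] at hceq
        have hsub : y0 l - y1 l ≠ 0 := sub_ne_zero.mpr (ne_of_gt hc)
        have heqn : Φ (wv l) = aP (c, xv l, l) * (y1 l - y0 l) := by
          have h9 : -Φ (wv l) = aP (c, xv l, l) * (y0 l - y1 l) := by
            rw [hceq]
            field_simp
          have h10 := congrArg Neg.neg h9
          rw [neg_neg] at h10
          rw [h10]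
          ring
        rw [heqn, abs_mul, abs_sub_comm (y0 l) (y1 l)]
        exact mul_le_mul_of_nonneg_right hgt.le (abs_nonneg _)
    rw [Real.norm_eq_abs, Real.norm_eq_abs]
    rw [div_mul_eq_mul_div, le_div_iff₀ havalpos]
    calc |y0 l - y1 l| * |aval| = |aval| / 2 * |y0 l - y1 l| * 2 := by ring
      _ ≤ |Φ (wv l)| * 2 := by
          exact mul_le_mul_of_nonneg_right hmajor (by norm_num)
      _ = 2 * |Φ (wv l)| := by ring
  have hO1 : (fun l => y0 l - y1 l) =O[𝓕] (fun l => Φ (wv l)) :=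
    Asymptotics.IsBigO.of_bound _ hkey
  exact hO1.trans hΦO
end
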